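/- Let ρ > 0 and let φ : ℕ → (0,∞) satisfy lim_{N→∞} (log N)/φ(N) = 0. Then for every real x < 0, lim_{N→∞} P((H_N − E(H_N))/φ(N) ≤ x) = 0, and for every real x > 0, lim_{N→∞} P((H_N − E(H_N))/φ(N) ≤ x) = 1. In particular, the centered and normalized height converges in distribution to the degenerate distribution at 0, so the central limit theorem fails for H_N. -/

import Mathlib

open Finset Filter Real Topology

/-- `r_{ρ,n}(i) = ρ^{-i} * C(n-1, i)^{-1}`. -/
noncomputable def rfun (ρ : ℝ) (n i : ℕ) : ℝ := (ρ ^ i * (Nat.choose (n - 1) i : ℝ))⁻¹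

/-- `P(H_N ≥ k)` for `k = 1,…,N`, and `0` for `k > N`. -/
noncomputable def tailP (ρ : ℝ) (N k : ℕ) : ℝ :=
  if k ≤ N then (∑ i ∈ Finset.range k, rfun ρ N i)⁻¹ else 0

/-- `P(H_N = k) = P(H_N ≥ k) − P(H_N ≥ k+1)`. -/
noncomputable def pmfP (ρ : ℝ) (N k : ℕ) : ℝ := tailP ρ N k - tailP ρ N (k + 1)

/-- `E(H_N) = ∑_{k=1}^N P(H_N ≥ k)`. -/
noncomputable def EH (ρ : ℝ) (N : ℕ) : ℝ := ∑ k ∈ Finset.Icc 1 N, tailP ρ N k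

/-- `Var(H_N) = ∑_{k=1}^N (k − E(H_N))² P(H_N = k)`. -/
noncomputable def VarH (ρ : ℝ) (N : ℕ) : ℝ :=
  ∑ k ∈ Finset.Icc 1 N, ((k : ℝ) - EH ρ N) ^ 2 * pmfP ρ N k

/-- `P(H_N ≤ t)` for a real threshold `t`. -/
noncomputable def cdfP (ρ : ℝ) (N : ℕ) (t : ℝ) : ℝ :=
  ∑ k ∈ (Finset.Icc 1 N).filter (fun k : ℕ => (k : ℝ) ≤ t), pmfP ρ N k

/-!
Write `r i = rfun ρ N i`, so that `P(H_N ≥ k) = 1 / (r 0 + ⋯ + r (k - 1))` with `r 0 = 1`.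
The ratio `r (i + 1) / r i = (i + 1) / (ρ (N - 1 - i))` increases with `i`. Fix `c < 1` with
`c (1 + ρ) > 1` and let `i₀` be the first index where this ratio reaches `1 / c`. Beyond `i₀` the
sequence `r` grows geometrically. Below it, log-convexity bounds `r 2, …, r i₀` by
`max (r 2) (r i₀)`, where `r 2 = O(1/N²)` and `r i₀` is exponentially small: it is at most `c⁻ᴺ`
times the smallest term, which the binomial theorem bounds by `N / (1 + ρ)^(N-1)`. Hence
`r 1 + ⋯ + r i₀ = O(1/N)`.
Let `K` be the last `k` with `r 0 + ⋯ + r (k - 1) ≤ 3/2`. Then `P(H_N < k) = O(1/N) + O(c^(K-k))`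
and `P(H_N ≥ k + 1) = O(c^(k-K))`, and summing the tails gives `E(H_N) = K + O(1)`. So
`H_N - E(H_N)` is tight, and since `log N / φ N → 0` forces `φ N → ∞`, dividing by `φ N` leaves
the point mass at `0`.
-/

section sequences

variable {f : ℕ → ℝ} {c : ℝ}

theorem le_pow_mul_of_forall_le_mul_succ (hc : 0 ≤ c) {a b : ℕ}
    (hab : a ≤ b) (h : ∀ j, a ≤ j → j < b → f j ≤ c * f (j + 1)) : f a ≤ c ^ (b - a) * f b := by
  induction b, hab using Nat.le_induction with
  | base => simp
  | succ b hab ih =>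
    calc f a ≤ c ^ (b - a) * f b := ih fun j hj hjb => h j hj (by omega)
      _ ≤ c ^ (b - a) * (c * f (b + 1)) := by gcongr; exact h b hab (by omega)
      _ = c ^ (b + 1 - a) * f (b + 1) := by rw [Nat.sub_add_comm hab, pow_succ]; ring

theorem pow_mul_le_of_forall_mul_succ_le (hc : 0 ≤ c) {a b : ℕ}
    (hab : a ≤ b) (h : ∀ j, a ≤ j → j < b → c * f (j + 1) ≤ f j) : c ^ (b - a) * f b ≤ f a := by
  have := le_pow_mul_of_forall_le_mul_succ (f := fun j => -f j) hc hab fun j hj hjb => by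
    linarith [h j hj hjb]
  linarith

theorem sum_Ico_le_of_forall_le_mul_succ (hc0 : 0 ≤ c) (hc1 : c < 1)
    {a b k : ℕ} (hk : k ≤ b + 1) (hfb : 0 ≤ f b)
    (h : ∀ j, a ≤ j → j < b → f j ≤ c * f (j + 1)) :
    ∑ i ∈ Ico a k, f i ≤ c ^ (b + 1 - k) / (1 - c) * f b :=
  calc ∑ i ∈ Ico a k, f i ≤ ∑ i ∈ Ico a k, c ^ (b - i) * f b := by
        refine sum_le_sum fun i hi => ?_
        rw [mem_Ico] at hi
        exact le_pow_mul_of_forall_le_mul_succ hc0 (by omega) fun j hj hjb => h j (by omega) hjb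
    _ = (∑ i ∈ Ico (b + 1 - k) (b + 1 - a), c ^ i) * f b := by
        rw [← sum_mul, sum_Ico_reflect (fun i => c ^ i) _ hk]
    _ ≤ c ^ (b + 1 - k) / (1 - c) * f b := by
        gcongr; exact geom_sum_Ico_le_of_lt_one hc0 hc1

theorem geom_sum_le_inv_one_sub (hc0 : 0 ≤ c) (hc1 : c < 1) (n : ℕ) :
    ∑ i ∈ range n, c ^ i ≤ (1 - c)⁻¹ := by
  have := geom_sum_Ico_le_of_lt_one (m := 0) (n := n) hc0 hc1
  rwa [Nat.Ico_zero_eq_range, pow_zero, one_div] at this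

theorem sum_Icc_pow_sub_le (hc0 : 0 ≤ c) (hc1 : c < 1) (K : ℕ) :
    ∑ k ∈ Icc 1 K, c ^ (K - k) ≤ (1 - c)⁻¹ := by
  rw [← Ico_add_one_right_eq_Icc, sum_Ico_reflect (fun i => c ^ i) 1 le_rfl]
  simpa using geom_sum_le_inv_one_sub hc0 hc1 K

theorem sum_Ioc_pow_sub_le (hc0 : 0 ≤ c) (hc1 : c < 1) (K N : ℕ) :
    ∑ k ∈ Ioc K N, c ^ (k - 1 - K) ≤ (1 - c)⁻¹ := by
  rw [← Ico_add_one_add_one_eq_Ioc, sum_Ico_eq_sum_range]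
  refine le_of_eq_of_le (sum_congr rfl fun j _ => ?_) (geom_sum_le_inv_one_sub hc0 hc1 _)
  congr 1
  omega

theorem sum_range_le_sum_range_add_sum_Ico (hf : ∀ i, 0 ≤ f i) (m k : ℕ) :
    ∑ i ∈ range k, f i ≤ ∑ i ∈ range m, f i + ∑ i ∈ Ico m k, f i := by
  rcases le_total m k with hmk | hkm
  · rw [sum_range_add_sum_Ico _ hmk]
  · rw [Ico_eq_empty_of_le hkm, sum_empty, add_zero]
    exact sum_le_sum_of_subset_of_nonneg (range_subset_range.2 hkm) fun i _ _ => hf i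

end sequences

theorem tendsto_atTop_of_div_tendsto_zero {α : Type*} {l : Filter α} {f g : α → ℝ}
    (hf : Tendsto f l atTop) (hg : ∀ᶠ x in l, 0 < g x)
    (hfg : Tendsto (fun x => f x / g x) l (𝓝 0)) :
    Tendsto g l atTop := by
  have hpos : ∀ᶠ x in l, 0 < f x / g x := by
    filter_upwards [hf.eventually_gt_atTop 0, hg] with x hfx hgx using div_pos hfx hgx
  have hinv : Tendsto (fun x => (f x / g x)⁻¹) l atTop :=
    tendsto_inv_nhdsGT_zero.comp
      (tendsto_nhdsWithin_of_tendsto_nhds_of_eventually_within _ hfg hpos)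
  refine (hf.atTop_mul_atTop₀ hinv).congr' ?_
  filter_upwards [hf.eventually_gt_atTop 0, hg] with x hfx hgx
  field_simp

theorem rfun_zero (ρ : ℝ) (N : ℕ) : rfun ρ N 0 = 1 := by simp [rfun]

theorem rfun_nonneg {ρ : ℝ} (hρ : 0 ≤ ρ) (N i : ℕ) : 0 ≤ rfun ρ N i := by
  unfold rfun; positivity

noncomputable def rfunSum (ρ : ℝ) (N k : ℕ) : ℝ := ∑ i ∈ range k, rfun ρ N i

section rfun

variable {ρ : ℝ} {N : ℕ}

theorem succ_mul_rfun (hρ : 0 < ρ) {i : ℕ} (hi : i + 1 < N) :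
    (i + 1) * rfun ρ N i = ρ * (N - 1 - i) * rfun ρ N (i + 1) := by
  have hCi : 0 < (N - 1).choose i := Nat.choose_pos (by omega)
  have hCi1 : 0 < (N - 1).choose (i + 1) := Nat.choose_pos (by omega)
  have hcast : ((N - 1 - i : ℕ) : ℝ) = N - 1 - i := by
    rw [Nat.cast_sub (by omega), Nat.cast_sub (by omega)]; simp
  have hC : ((N - 1).choose (i + 1) : ℝ) * (i + 1) = (N - 1).choose i * (N - 1 - i) := by
    rw [← hcast]; exact_mod_cast Nat.choose_succ_right_eq (N - 1) i
  rw [rfun, rfun, ← div_eq_mul_inv, ← div_eq_mul_inv,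
    div_eq_div_iff (by positivity) (by positivity)]
  linear_combination ρ ^ (i + 1) * hC

theorem rfun_le_mul_rfun_succ (hρ : 0 < ρ) {c : ℝ} {i : ℕ} (hi : i + 1 < N)
    (h : ρ * (N - 1 - i) ≤ c * (i + 1)) : rfun ρ N i ≤ c * rfun ρ N (i + 1) := by
  have hr := rfun_nonneg hρ.le N (i + 1)
  refine le_of_mul_le_mul_left ?_ (by positivity : (0 : ℝ) < i + 1)
  rw [succ_mul_rfun hρ hi]
  nlinarith

theorem mul_rfun_succ_le_rfun (hρ : 0 < ρ) {c : ℝ} {i : ℕ} (hi : i + 1 < N)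
    (h : c * (i + 1) ≤ ρ * (N - 1 - i)) : c * rfun ρ N (i + 1) ≤ rfun ρ N i := by
  have hr := rfun_nonneg hρ.le N (i + 1)
  refine le_of_mul_le_mul_left ?_ (by positivity : (0 : ℝ) < i + 1)
  rw [succ_mul_rfun hρ hi]
  nlinarith

theorem rfun_le_max (hρ : 0 < ρ) {a i b : ℕ} (hai : a ≤ i) (hib : i ≤ b) (hb : b < N) :
    rfun ρ N i ≤ max (rfun ρ N a) (rfun ρ N b) := by
  by_cases hi : ρ * (N - 1 - i) ≤ 1 * (i + 1)
  · refine le_max_of_le_right ?_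
    have := le_pow_mul_of_forall_le_mul_succ (f := rfun ρ N) zero_le_one hib fun j hij hjb =>
      rfun_le_mul_rfun_succ hρ (show j + 1 < N by omega) (c := 1) (by
        have : (i : ℝ) ≤ j := by exact_mod_cast hij
        nlinarith)
    simpa using this
  · refine le_max_of_le_left ?_
    have := pow_mul_le_of_forall_mul_succ_le (f := rfun ρ N) zero_le_one hai fun j _ hji =>
      mul_rfun_succ_le_rfun hρ (show j + 1 < N by omega) (c := 1) (by
        have : (j : ℝ) + 1 ≤ i := by exact_mod_cast hji
        nlinarith)
    simpa using this

theorem exists_rfun_le (hρ : 0 < ρ) (hN : 1 ≤ N) :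
    ∃ m < N, rfun ρ N m ≤ N / (1 + ρ) ^ (N - 1) := by
  obtain ⟨m, hm, hmax⟩ := exists_max_image (range N)
    (fun k => ρ ^ k * ((N - 1).choose k : ℝ)) ⟨0, mem_range.2 hN⟩
  have hmN := mem_range.1 hm
  have hpos : 0 < ρ ^ m * ((N - 1).choose m : ℝ) := by
    have := Nat.choose_pos (show m ≤ N - 1 by omega); positivity
  have hbinom : (1 + ρ) ^ (N - 1) ≤ N * (ρ ^ m * (N - 1).choose m) :=
    calc (1 + ρ) ^ (N - 1) = ∑ k ∈ range N, ρ ^ k * ((N - 1).choose k : ℝ) := by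
          rw [add_comm, add_pow, Nat.sub_add_cancel hN]; simp
      _ ≤ ∑ _k ∈ range N, ρ ^ m * ((N - 1).choose m : ℝ) := sum_le_sum hmax
      _ = N * (ρ ^ m * (N - 1).choose m) := by simp
  refine ⟨m, hmN, ?_⟩
  rw [rfun, le_div_iff₀ (by positivity), inv_mul_eq_div, div_le_iff₀ hpos]
  linarith

theorem exists_growth_start (hρ : 0 < ρ) {c : ℝ} (hc0 : 0 ≤ c) (hc1 : c ≤ 1) (hN : 1 ≤ N) :
    ∃ i₀ < N, (∀ j, i₀ ≤ j → j + 1 < N → rfun ρ N j ≤ c * rfun ρ N (j + 1)) ∧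
      c ^ N * rfun ρ N i₀ ≤ N / (1 + ρ) ^ (N - 1) := by
  have hlast : ρ * (N - 1 - (N - 1 : ℕ)) ≤ c * ((N - 1 : ℕ) + 1) := by
    rw [Nat.cast_sub hN]; simp; positivity
  have hP : ∃ i : ℕ, ρ * (N - 1 - i) ≤ c * (i + 1) := ⟨N - 1, hlast⟩
  set i₀ := Nat.find hP
  have hi₀ : i₀ < N := (Nat.find_min' hP hlast).trans_lt (by omega)
  have hgrow : ∀ j, i₀ ≤ j → j + 1 < N → rfun ρ N j ≤ c * rfun ρ N (j + 1) :=
    fun j hj hjN => rfun_le_mul_rfun_succ hρ hjN (by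
      have := Nat.find_spec hP
      have : (i₀ : ℝ) ≤ j := by exact_mod_cast hj
      nlinarith)
  have hdecay : ∀ j < i₀, c * rfun ρ N (j + 1) ≤ rfun ρ N j :=
    fun j hj => mul_rfun_succ_le_rfun hρ (by omega) (not_le.1 (Nat.find_min hP hj)).le
  refine ⟨i₀, hi₀, hgrow, ?_⟩
  obtain ⟨m, hmN, hrm⟩ := exists_rfun_le hρ hN
  refine le_trans ?_ hrm
  rcases le_total m i₀ with hm | hm
  · calc c ^ N * rfun ρ N i₀ ≤ c ^ (i₀ - m) * rfun ρ N i₀ :=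
          mul_le_mul_of_nonneg_right (pow_le_pow_of_le_one hc0 hc1 (by omega))
            (rfun_nonneg hρ.le N _)
      _ ≤ rfun ρ N m := pow_mul_le_of_forall_mul_succ_le hc0 hm fun j _ hj => hdecay j hj
  · calc c ^ N * rfun ρ N i₀ ≤ rfun ρ N i₀ :=
          mul_le_of_le_one_left (rfun_nonneg hρ.le N _) (pow_le_one₀ hc0 hc1)
      _ ≤ c ^ (m - i₀) * rfun ρ N m :=
          le_pow_mul_of_forall_le_mul_succ hc0 hm fun j hj hjm => hgrow j hj (by omega)
      _ ≤ rfun ρ N m := mul_le_of_le_one_left (rfun_nonneg hρ.le N m) (pow_le_one₀ hc0 hc1)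

theorem rfun_one_le (hρ : 0 < ρ) (hN : 2 ≤ N) : rfun ρ N 1 ≤ 2 / (ρ * N) := by
  have hN' : (2 : ℝ) ≤ N := by exact_mod_cast hN
  rw [rfun, pow_one, Nat.choose_one_right, Nat.cast_sub (by omega), Nat.cast_one, ← one_div,
    div_le_div_iff₀ (by nlinarith) (by positivity)]
  nlinarith

theorem rfun_two_le (hρ : 0 < ρ) (hN : 4 ≤ N) : rfun ρ N 2 ≤ 8 / (ρ ^ 2 * N ^ 2) := by
  have hN' : (4 : ℝ) ≤ N := by exact_mod_cast hN
  have hρ2 : 0 < ρ ^ 2 := by positivity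
  rw [rfun, Nat.cast_choose_two, Nat.cast_sub (by omega), Nat.cast_one, ← one_div,
    div_le_div_iff₀ (by apply mul_pos hρ2; nlinarith) (by positivity)]
  nlinarith [mul_le_mul_of_nonneg_left (by nlinarith : (N : ℝ) ^ 2 ≤ 4 * ((N - 1) * (N - 1 - 1)))
    hρ2.le]

theorem rfunSum_succ_le (hρ : 0 < ρ) {i₀ : ℕ} (hi₀ : i₀ < N) :
    rfunSum ρ N (i₀ + 1) ≤ 1 + rfun ρ N 1 + N * (rfun ρ N 2 + rfun ρ N i₀) := by
  have hr := rfun_nonneg hρ.le N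
  calc rfunSum ρ N (i₀ + 1) ≤ ∑ i ∈ range 2, rfun ρ N i + ∑ i ∈ Ico 2 (i₀ + 1), rfun ρ N i :=
        sum_range_le_sum_range_add_sum_Ico hr _ _
    _ ≤ (1 + rfun ρ N 1) + #(Ico 2 (i₀ + 1)) • (rfun ρ N 2 + rfun ρ N i₀) := by
        gcongr
        · simp [sum_range_succ, rfun_zero]
        · refine sum_le_card_nsmul _ _ _ fun i hi => ?_
          rw [mem_Ico] at hi
          exact (rfun_le_max hρ hi.1 (by omega) hi₀).trans (max_le_add_of_nonneg (hr _) (hr _))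
    _ ≤ 1 + rfun ρ N 1 + N * (rfun ρ N 2 + rfun ρ N i₀) := by
        rw [nsmul_eq_mul, Nat.card_Ico]
        gcongr
        · exact add_nonneg (hr _) (hr _)
        · exact_mod_cast (by omega : i₀ + 1 - 2 ≤ N)

theorem rfunSum_one : rfunSum ρ N 1 = 1 := by simp [rfunSum, rfun_zero]

theorem one_le_rfunSum (hρ : 0 ≤ ρ) {k : ℕ} (hk : 1 ≤ k) : 1 ≤ rfunSum ρ N k := by
  rw [← rfun_zero ρ N]
  exact single_le_sum (fun i _ => rfun_nonneg hρ N i) (mem_range.2 hk)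

theorem rfun_le_rfunSum (hρ : 0 ≤ ρ) {i k : ℕ} (hik : i < k) : rfun ρ N i ≤ rfunSum ρ N k :=
  single_le_sum (fun j _ => rfun_nonneg hρ N j) (mem_range.2 hik)

theorem tailP_of_le {k : ℕ} (hk : k ≤ N) : tailP ρ N k = (rfunSum ρ N k)⁻¹ := if_pos hk

theorem tailP_of_lt {k : ℕ} (hk : N < k) : tailP ρ N k = 0 := if_neg (not_le.2 hk)

theorem tailP_one (hN : 1 ≤ N) : tailP ρ N 1 = 1 := by
  rw [tailP_of_le hN, rfunSum_one, inv_one]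

theorem tailP_nonneg (hρ : 0 ≤ ρ) (k : ℕ) : 0 ≤ tailP ρ N k := by
  rcases le_or_gt k N with hk | hk
  · rw [tailP_of_le hk]
    exact inv_nonneg.2 (sum_nonneg fun i _ => rfun_nonneg hρ N i)
  · rw [tailP_of_lt hk]

theorem tailP_le_one (hρ : 0 ≤ ρ) (k : ℕ) : tailP ρ N k ≤ 1 := by
  rcases le_or_gt k N with hk | hk
  · rw [tailP_of_le hk]
    rcases Nat.eq_zero_or_pos k with rfl | hk0
    · simp [rfunSum]
    · exact inv_le_one_of_one_le₀ (one_le_rfunSum hρ hk0)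
  · rw [tailP_of_lt hk]
    exact zero_le_one

-- `⌊t⌋₊ = 0` for `t < 1`, so this also covers thresholds below the support.
theorem cdfP_eq_one_sub_tailP (hN : 1 ≤ N) (t : ℝ) :
    cdfP ρ N t = 1 - tailP ρ N (⌊t⌋₊ + 1) := by
  set M := min N ⌊t⌋₊
  have hfilter : (Icc 1 N).filter (fun k : ℕ => (k : ℝ) ≤ t) = Ico 1 (M + 1) := by
    ext k
    simp only [mem_filter, mem_Icc, mem_Ico, Nat.lt_add_one_iff, M, le_min_iff]
    constructor
    · rintro ⟨⟨h1, h2⟩, h3⟩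
      exact ⟨h1, h2, (Nat.le_floor_iff' (by omega)).2 h3⟩
    · rintro ⟨h1, h2, h3⟩
      exact ⟨⟨h1, h2⟩, (Nat.le_floor_iff' (by omega)).1 h3⟩
  have htail : tailP ρ N (M + 1) = tailP ρ N (⌊t⌋₊ + 1) := by
    rcases le_total N ⌊t⌋₊ with h | h
    · rw [show M = N from min_eq_left h, tailP_of_lt (by omega), tailP_of_lt (by omega)]
    · rw [show M = ⌊t⌋₊ from min_eq_right h]
  have hneg : ∑ k ∈ Ico 1 (M + 1), pmfP ρ N k
      = -∑ k ∈ Ico 1 (M + 1), (tailP ρ N (k + 1) - tailP ρ N k) := by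
    rw [← sum_neg_distrib]
    simp only [pmfP, neg_sub]
  rw [cdfP, hfilter, hneg, sum_Ico_sub _ (by omega), htail, tailP_one hN]
  ring

end rfun

structure IsSplitIndex (ρ c ε : ℝ) (N i₀ : ℕ) : Prop where
  lt : i₀ < N
  le_mul_succ : ∀ j, i₀ ≤ j → j + 1 < N → rfun ρ N j ≤ c * rfun ρ N (j + 1)
  rfunSum_le : rfunSum ρ N (i₀ + 1) ≤ 1 + ε

theorem eventually_isSplitIndex {ρ c : ℝ} (hρ : 0 < ρ) (hc1 : c < 1) (hc : 1 < c * (1 + ρ)) :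
    ∀ᶠ N : ℕ in atTop, ∃ i₀, IsSplitIndex ρ c ((1 + 2 / ρ + 8 / ρ ^ 2) / N) N i₀ := by
  have hc0 : 0 < c := by
    by_contra! h
    nlinarith
  have hlarge : ∀ᶠ N : ℕ in atTop, (N : ℝ) ^ 3 * (1 + ρ) ≤ (c * (1 + ρ)) ^ N := by
    have := (tendsto_pow_const_div_const_pow_of_one_lt 3 hc).const_mul (1 + ρ)
    rw [mul_zero] at this
    filter_upwards [this.eventually_le_const one_pos] with N hN
    rw [mul_div_assoc', div_le_one (by positivity)] at hN
    linarith
  filter_upwards [eventually_ge_atTop 4, hlarge] with N hN4 hN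
  obtain ⟨i₀, hi₀, hgrow, hri₀⟩ := exists_growth_start hρ hc0.le hc1.le (by omega : 1 ≤ N)
  refine ⟨i₀, hi₀, hgrow, (rfunSum_succ_le hρ hi₀).trans ?_⟩
  have hNpos : (0 : ℝ) < N := by positivity
  have hr := rfun_nonneg hρ.le N i₀
  have hP : (N : ℝ) ^ 3 ≤ c ^ N * (1 + ρ) ^ (N - 1) := by
    have hpow : (c * (1 + ρ)) ^ N = c ^ N * (1 + ρ) ^ (N - 1) * (1 + ρ) := by
      rw [mul_pow, mul_assoc, ← pow_succ, Nat.sub_add_cancel (by omega)]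
    exact le_of_mul_le_mul_right (hN.trans_eq hpow) (by positivity)
  rw [le_div_iff₀ (by positivity)] at hri₀
  have hNr : N * rfun ρ N i₀ ≤ 1 / N := by
    have : (N : ℝ) ^ 3 * rfun ρ N i₀ ≤ N := by nlinarith [mul_le_mul_of_nonneg_right hP hr]
    rw [le_div_iff₀ hNpos]
    nlinarith
  have h2 := mul_le_mul_of_nonneg_left (rfun_two_le hρ hN4) hNpos.le
  have e1 : (N : ℝ) * (8 / (ρ ^ 2 * N ^ 2)) = 8 / ρ ^ 2 / N := by field_simp
  have e2 : (1 + 2 / ρ + 8 / ρ ^ 2) / N = 1 / N + 2 / (ρ * N) + 8 / ρ ^ 2 / N := by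
    field_simp
  linarith [rfun_one_le hρ (N := N) (by omega)]

noncomputable def heightCenter (ρ : ℝ) (N : ℕ) : ℕ :=
  Nat.findGreatest (fun k => rfunSum ρ N k ≤ 3 / 2) N

section heightCenter

variable {ρ c ε : ℝ} {N i₀ : ℕ}

theorem heightCenter_le : heightCenter ρ N ≤ N := Nat.findGreatest_le N

theorem rfunSum_heightCenter_le (hN : 1 ≤ N) : rfunSum ρ N (heightCenter ρ N) ≤ 3 / 2 :=
  Nat.findGreatest_spec (P := fun k => rfunSum ρ N k ≤ 3 / 2) hN (by norm_num [rfunSum_one])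

theorem lt_rfunSum_of_heightCenter_lt {k : ℕ} (hk : heightCenter ρ N < k) (hkN : k ≤ N) :
    3 / 2 < rfunSum ρ N k :=
  not_le.1 (Nat.findGreatest_is_greatest hk hkN)

theorem IsSplitIndex.lt_heightCenter (h : IsSplitIndex ρ c ε N i₀) (hε : ε ≤ 1 / 4) :
    i₀ < heightCenter ρ N :=
  Nat.le_findGreatest h.lt (by linarith [h.rfunSum_le])

theorem IsSplitIndex.rfunSum_le_add (h : IsSplitIndex ρ c ε N i₀) (hρ : 0 < ρ) (hc0 : 0 ≤ c)
    (hc1 : c < 1) {k b : ℕ} (hk : k ≤ b + 1) (hb : b < N) :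
    rfunSum ρ N k ≤ 1 + ε + c ^ (b + 1 - k) / (1 - c) * rfun ρ N b :=
  calc rfunSum ρ N k ≤ rfunSum ρ N (i₀ + 1) + ∑ i ∈ Ico (i₀ + 1) k, rfun ρ N i :=
        sum_range_le_sum_range_add_sum_Ico (rfun_nonneg hρ.le N) _ _
    _ ≤ 1 + ε + c ^ (b + 1 - k) / (1 - c) * rfun ρ N b :=
        add_le_add h.rfunSum_le <| sum_Ico_le_of_forall_le_mul_succ hc0 hc1 hk
          (rfun_nonneg hρ.le N b) fun j hj hjb => h.le_mul_succ j (by omega) (by omega)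

theorem IsSplitIndex.one_sub_tailP_le (h : IsSplitIndex ρ c ε N i₀) (hρ : 0 < ρ) (hc0 : 0 ≤ c)
    (hc1 : c < 1) (hε : ε ≤ 1 / 4) {k : ℕ} (hk1 : 1 ≤ k) (hk : k ≤ heightCenter ρ N) :
    1 - tailP ρ N k ≤ ε + 2 / (1 - c) * c ^ (heightCenter ρ N - k) := by
  set K := heightCenter ρ N
  have hK := h.lt_heightCenter hε
  have hKN : K ≤ N := heightCenter_le
  have hrK : rfun ρ N (K - 1) ≤ 3 / 2 :=
    (rfun_le_rfunSum hρ.le (by omega)).trans (rfunSum_heightCenter_le (by omega))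
  have hS := h.rfunSum_le_add hρ hc0 hc1 (k := k) (b := K - 1) (by omega) (by omega)
  rw [show K - 1 + 1 - k = K - k by omega] at hS
  have hdecay : c ^ (K - k) / (1 - c) * rfun ρ N (K - 1) ≤ 2 / (1 - c) * c ^ (K - k) := by
    rw [div_mul_eq_mul_div, div_mul_eq_mul_div, mul_comm 2]
    gcongr
    linarith
  rw [tailP_of_le (hk.trans hKN)]
  have hS : 0 < rfunSum ρ N k := one_pos.trans_le (one_le_rfunSum hρ.le hk1)
  linarith [one_sub_inv_le_log_of_pos hS, log_le_sub_one_of_pos hS]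

theorem IsSplitIndex.rfun_heightCenter_ge (h : IsSplitIndex ρ c ε N i₀) (hρ : 0 < ρ)
    (hc0 : 0 ≤ c) (hc1 : c < 1) (hε : ε ≤ 1 / 4) (hKN : heightCenter ρ N < N) :
    (1 - c) / 4 ≤ rfun ρ N (heightCenter ρ N) := by
  set K := heightCenter ρ N
  have h1 := lt_rfunSum_of_heightCenter_lt (lt_add_one K) hKN
  have h2 := h.rfunSum_le_add hρ hc0 hc1 (k := K + 1) (b := K) le_rfl hKN
  rw [Nat.sub_self, pow_zero, div_mul_eq_mul_div, one_mul] at h2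
  have : 1 / 4 ≤ rfun ρ N K / (1 - c) := by linarith
  rwa [le_div_iff₀ (by linarith), one_div_mul_eq_div] at this

theorem IsSplitIndex.tailP_le (h : IsSplitIndex ρ c ε N i₀) (hρ : 0 < ρ) (hc0 : 0 ≤ c)
    (hc1 : c < 1) (hε : ε ≤ 1 / 4) {k : ℕ} (hk : heightCenter ρ N < k) :
    tailP ρ N k ≤ 4 / (1 - c) * c ^ (k - 1 - heightCenter ρ N) := by
  set K := heightCenter ρ N
  have hc1' : 0 < 1 - c := by linarith
  rcases le_or_gt k N with hkN | hkN
  swap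
  · rw [tailP_of_lt hkN]; positivity
  have hK := h.lt_heightCenter hε
  have hrK := h.rfun_heightCenter_ge hρ hc0 hc1 hε (by omega)
  have hchain : rfun ρ N K ≤ c ^ (k - 1 - K) * rfun ρ N (k - 1) :=
    le_pow_mul_of_forall_le_mul_succ hc0 (by omega) fun j hj hjk =>
      h.le_mul_succ j (by omega) (by omega)
  have hS : (1 - c) / 4 ≤ c ^ (k - 1 - K) * rfunSum ρ N k :=
    hrK.trans (hchain.trans (by gcongr; exact rfun_le_rfunSum hρ.le (by omega)))
  have hS1 := one_le_rfunSum hρ.le (N := N) (show 1 ≤ k by omega)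
  rw [tailP_of_le hkN, inv_le_iff_one_le_mul₀ (by linarith), div_mul_eq_mul_div,
    div_mul_eq_mul_div, le_div_iff₀ hc1']
  linarith

theorem IsSplitIndex.heightCenter_sub_le_EH (h : IsSplitIndex ρ c ε N i₀) (hρ : 0 < ρ)
    (hc0 : 0 ≤ c) (hc1 : c < 1) (hε : ε ≤ 1 / 4) :
    heightCenter ρ N - (N * ε + 2 / (1 - c) ^ 2) ≤ EH ρ N := by
  set K := heightCenter ρ N
  have hKN : K ≤ N := heightCenter_le
  have hε0 : 0 ≤ ε := by
    linarith [h.rfunSum_le, one_le_rfunSum hρ.le (N := N) (le_add_self : 1 ≤ i₀ + 1)]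
  have hsum : ∑ k ∈ Icc 1 K, (1 - (ε + 2 / (1 - c) * c ^ (K - k))) ≤ EH ρ N :=
    calc _ ≤ ∑ k ∈ Icc 1 K, tailP ρ N k := sum_le_sum fun k hk => by
          rw [mem_Icc] at hk
          linarith [h.one_sub_tailP_le hρ hc0 hc1 hε hk.1 hk.2]
      _ ≤ EH ρ N := sum_le_sum_of_subset_of_nonneg (Icc_subset_Icc le_rfl hKN)
          fun k _ _ => tailP_nonneg hρ.le k
  rw [sum_sub_distrib, sum_add_distrib, ← mul_sum] at hsum
  simp only [sum_const, Nat.card_Icc, add_tsub_cancel_right, nsmul_eq_mul, mul_one] at hsum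
  have hgeom := mul_le_mul_of_nonneg_left (sum_Icc_pow_sub_le hc0 hc1 K)
    (div_nonneg zero_le_two (by linarith) : 0 ≤ 2 / (1 - c))
  rw [← div_eq_mul_inv, div_div, ← sq] at hgeom
  have hKε : (K : ℝ) * ε ≤ N * ε := by gcongr
  linarith

theorem IsSplitIndex.EH_le_heightCenter_add (h : IsSplitIndex ρ c ε N i₀) (hρ : 0 < ρ)
    (hc0 : 0 ≤ c) (hc1 : c < 1) (hε : ε ≤ 1 / 4) :
    EH ρ N ≤ heightCenter ρ N + 4 / (1 - c) ^ 2 := by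
  set K := heightCenter ρ N
  have hsplit : EH ρ N = ∑ k ∈ Ioc 0 K, tailP ρ N k + ∑ k ∈ Ioc K N, tailP ρ N k := by
    rw [sum_Ioc_consecutive _ (Nat.zero_le K) heightCenter_le, EH, ← Icc_add_one_left_eq_Ioc,
      zero_add]
  have hlow : ∑ k ∈ Ioc 0 K, tailP ρ N k ≤ K := by
    simpa using sum_le_card_nsmul (Ioc 0 K) _ 1 fun k _ => tailP_le_one hρ.le k
  have hhigh : ∑ k ∈ Ioc K N, tailP ρ N k ≤ 4 / (1 - c) ^ 2 :=
    calc _ ≤ ∑ k ∈ Ioc K N, 4 / (1 - c) * c ^ (k - 1 - K) :=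
          sum_le_sum fun k hk => h.tailP_le hρ hc0 hc1 hε (mem_Ioc.1 hk).1
      _ ≤ 4 / (1 - c) * (1 - c)⁻¹ := by
          rw [← mul_sum]
          gcongr
          exact sum_Ioc_pow_sub_le hc0 hc1 K N
      _ = 4 / (1 - c) ^ 2 := by rw [← div_eq_mul_inv, div_div, ← sq]
  linarith

end heightCenter

theorem eventually_concentration {ρ : ℝ} (hρ : 0 < ρ) :
    ∃ c, 0 < c ∧ c < 1 ∧ ∃ C, ∀ᶠ N : ℕ in atTop, ∃ K : ℕ, |EH ρ N - K| ≤ C ∧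
      (∀ k, 1 ≤ k → k ≤ K → 1 - tailP ρ N k ≤ C / N + C * c ^ (K - k)) ∧
      ∀ k, K < k → tailP ρ N k ≤ C * c ^ (k - 1 - K) := by
  -- any `c` with `1 / (1 + ρ) < c < 1` would do
  set c := (1 + ρ / 2) / (1 + ρ)
  have hc0 : 0 < c := by positivity
  have hc1 : c < 1 := (div_lt_one (by positivity)).2 (by linarith)
  have hc : 1 < c * (1 + ρ) := by rw [div_mul_cancel₀ _ (by positivity)]; linarith
  have hc1' : 0 < 1 - c := by linarith
  set A := 1 + 2 / ρ + 8 / ρ ^ 2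
  set C := A + 4 / (1 - c) ^ 2 + 4 / (1 - c) with hC
  have hA : 0 ≤ A := by positivity
  have h4 : 0 ≤ 4 / (1 - c) ^ 2 := by positivity
  have h4' : 2 / (1 - c) ≤ 4 / (1 - c) := by gcongr; norm_num
  refine ⟨c, hc0, hc1, C, ?_⟩
  have hsmall : ∀ᶠ N : ℕ in atTop, A / N ≤ 1 / 4 :=
    (tendsto_const_div_atTop_nhds_zero_nat A).eventually_le_const (by norm_num)
  filter_upwards [eventually_isSplitIndex hρ hc1 hc, hsmall, eventually_gt_atTop 0]
    with N ⟨i₀, h⟩ hε hN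
  change IsSplitIndex ρ c (A / N) N i₀ at h
  refine ⟨heightCenter ρ N, ?_, fun k hk1 hk => ?_, fun k hk => ?_⟩
  · have hlow := h.heightCenter_sub_le_EH hρ hc0.le hc1 hε
    have hhigh := h.EH_le_heightCenter_add hρ hc0.le hc1 hε
    rw [mul_div_cancel₀ _ (by positivity)] at hlow
    have : 2 / (1 - c) ^ 2 ≤ 4 / (1 - c) ^ 2 := by gcongr; norm_num
    rw [abs_le]
    constructor <;> linarith [div_pos four_pos hc1']
  · refine (h.one_sub_tailP_le hρ hc0.le hc1 hε hk1 hk).trans (add_le_add ?_ ?_)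
    · gcongr
      linarith [div_pos four_pos hc1']
    · gcongr
      linarith
  · refine (h.tailP_le hρ hc0.le hc1 hε hk).trans ?_
    gcongr
    linarith

theorem tendsto_cdfP_sub {ρ : ℝ} (hρ : 0 < ρ) {s : ℕ → ℝ} (hs : Tendsto s atTop atTop) :
    Tendsto (fun N => cdfP ρ N (EH ρ N - s N)) atTop (𝓝 0) := by
  obtain ⟨c, hc0, hc1, C, hC⟩ := eventually_concentration hρ
  have hg : Tendsto (fun N : ℕ => C / N + C * c ^ (s N + (-C - 1))) atTop (𝓝 0) := by
    simpa using (tendsto_const_div_atTop_nhds_zero_nat C).add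
      (((tendsto_rpow_atTop_of_base_lt_one c (by linarith) hc1).comp
        (tendsto_atTop_add_const_right _ (-C - 1) hs)).const_mul C)
  refine tendsto_of_tendsto_of_tendsto_of_le_of_le' tendsto_const_nhds hg ?_ ?_
  · filter_upwards [eventually_ge_atTop 1] with N hN
    rw [cdfP_eq_one_sub_tailP hN]
    linarith [tailP_le_one hρ.le (N := N) (⌊EH ρ N - s N⌋₊ + 1)]
  · filter_upwards [hC, hs.eventually_ge_atTop (C + 1), eventually_ge_atTop 1]
      with N ⟨K, hK, hlow, _⟩ hsN hN
    have hC0 : 0 ≤ C := (abs_nonneg _).trans hK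
    have hK' := abs_le.1 hK
    set t := EH ρ N - s N
    rw [cdfP_eq_one_sub_tailP hN]
    rcases lt_or_ge t 0 with ht | ht
    · rw [Nat.floor_of_nonpos ht.le, zero_add, tailP_one hN, sub_self]
      exact add_nonneg (div_nonneg hC0 (Nat.cast_nonneg _)) (mul_nonneg hC0 (rpow_nonneg hc0.le _))
    · have hfloor := Nat.floor_le ht
      have hk : ⌊t⌋₊ + 1 ≤ K := by exact_mod_cast (by linarith : (⌊t⌋₊ : ℝ) + 1 ≤ K)
      refine (hlow _ le_add_self hk).trans (add_le_add_right (mul_le_mul_of_nonneg_left ?_ hC0) _)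
      rw [← rpow_natCast]
      refine rpow_le_rpow_of_exponent_ge hc0 hc1.le ?_
      rw [Nat.cast_sub hk]
      push_cast
      linarith

theorem tendsto_cdfP_add {ρ : ℝ} (hρ : 0 < ρ) {s : ℕ → ℝ} (hs : Tendsto s atTop atTop) :
    Tendsto (fun N => cdfP ρ N (EH ρ N + s N)) atTop (𝓝 1) := by
  obtain ⟨c, hc0, hc1, C, hC⟩ := eventually_concentration hρ
  have hg : Tendsto (fun N : ℕ => 1 - C * c ^ (s N + (-C - 1))) atTop (𝓝 1) := by
    simpa using tendsto_const_nhds.sub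
      (((tendsto_rpow_atTop_of_base_lt_one c (by linarith) hc1).comp
        (tendsto_atTop_add_const_right _ (-C - 1) hs)).const_mul C)
  refine tendsto_of_tendsto_of_tendsto_of_le_of_le' hg tendsto_const_nhds ?_ ?_
  · filter_upwards [hC, hs.eventually_ge_atTop (C + 1), eventually_ge_atTop 1]
      with N ⟨K, hK, _, hhigh⟩ hsN hN
    have hC0 : 0 ≤ C := (abs_nonneg _).trans hK
    have hK' := abs_le.1 hK
    set t := EH ρ N + s N
    have hfloor := Nat.lt_floor_add_one t
    have hk : K < ⌊t⌋₊ + 1 := by exact_mod_cast (by linarith : (K : ℝ) < ⌊t⌋₊ + 1)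
    rw [cdfP_eq_one_sub_tailP hN]
    refine sub_le_sub_left ((hhigh _ hk).trans (mul_le_mul_of_nonneg_left ?_ hC0)) 1
    rw [← rpow_natCast]
    refine rpow_le_rpow_of_exponent_ge hc0 hc1.le ?_
    rw [Nat.add_sub_cancel, Nat.cast_sub (by omega)]
    linarith
  · filter_upwards [eventually_ge_atTop 1] with N hN
    rw [cdfP_eq_one_sub_tailP hN]
    linarith [tailP_nonneg hρ.le (N := N) (⌊EH ρ N + s N⌋₊ + 1)]

theorem height_fluctuation_degenerate (ρ : ℝ) (hρ : 0 < ρ) (φ : ℕ → ℝ)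
    (hφpos : ∀ N, 0 < φ N)
    (hφ : Tendsto (fun N : ℕ => Real.log N / φ N) atTop (𝓝 0)) :
    (∀ x : ℝ, x < 0 →
        Tendsto (fun N : ℕ => cdfP ρ N (EH ρ N + x * φ N)) atTop (𝓝 0)) ∧
    (∀ x : ℝ, 0 < x →
        Tendsto (fun N : ℕ => cdfP ρ N (EH ρ N + x * φ N)) atTop (𝓝 1)) := by
  have hφtop : Tendsto φ atTop atTop := tendsto_atTop_of_div_tendsto_zero
    (tendsto_log_atTop.comp tendsto_natCast_atTop_atTop) (Eventually.of_forall hφpos) hφ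
  refine ⟨fun x hx => ?_, fun x hx => tendsto_cdfP_add hρ (hφtop.const_mul_atTop hx)⟩
  simpa using tendsto_cdfP_sub hρ (hφtop.const_mul_atTop (neg_pos.2 hx))
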